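/- arXiv:2509.06789 — 3 statements merged into one kernel-verified Lean document; each statement's English description precedes it below -/
import Mathlib

section
/- In the graph G constructed from a set cover instance (U, 𝒮), the minimum, over all shortest path trees from s spanning the terminal set U, of the number of vertices of the tree that lie in 𝒮 (the nonterminals other than s) equals the minimum cardinality of a subfamily of 𝒮 that covers U. -/
namespace SSPT

variable {V : Type*}

/-- A walk from `x` to `y` in the digraph with edge relation `E`: a nonempty list of
vertices starting at `x`, ending at `y`, whose consecutive pairs are edges. -/
def IsWalk (E : V → V → Prop) (x y : V) (p : List V) : Prop :=
  p ≠ [] ∧ p.head? = some x ∧ p.getLast? = some y ∧ p.Chain' E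

/-- The weight of a walk: the sum of the weights of its (consecutive) edges. -/
def walkWeight (w : V → V → ℝ) (p : List V) : ℝ :=
  ((p.zip p.tail).map fun e => w e.1 e.2).sum

/-- `y` is reachable from `x`. -/
def Reach (E : V → V → Prop) (x y : V) : Prop := ∃ p, IsWalk E x y p

/-- `d` is the shortest-path distance function from `s`: for every vertex `v` reachable
from `s`, `d v` is the minimum weight of a walk from `s` to `v` (attained by some walk). -/
def IsDist (E : V → V → Prop) (w : V → V → ℝ) (s : V) (d : V → ℝ) : Prop :=
  ∀ v, Reach E s v →
    (∃ p, IsWalk E s v p ∧ walkWeight w p = d v) ∧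
    ∀ p, IsWalk E s v p → d v ≤ walkWeight w p

/-- An edge `(u,v)` is tight: `u`, `v` are reachable from `s` and `d u + w u v = d v`. -/
def Tight (E : V → V → Prop) (w : V → V → ℝ) (s : V) (d : V → ℝ) (u v : V) : Prop :=
  E u v ∧ Reach E s u ∧ Reach E s v ∧ d u + w u v = d v

/-- `v` is a vertex of the subgraph `T` (rooted at `s`): it is `s` or an endpoint of an
edge of `T`. -/
def InTree (T : V → V → Prop) (s v : V) : Prop :=
  v = s ∨ (∃ u, T u v) ∨ (∃ u, T v u)

/-- `T` is a tree rooted at `s`: every vertex of `T` is reachable from `s`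
by a unique walk in `T`. -/
def IsTree (T : V → V → Prop) (s : V) : Prop :=
  ∀ v, InTree T s v → ∃! p : List V, IsWalk T s v p

/-- The number of non-terminal vertices of `T` (vertices other than `s` not in `X`). -/
noncomputable def nt (T : V → V → Prop) (s : V) (X : Set V) : ℕ :=
  {v | InTree T s v ∧ v ≠ s ∧ v ∉ X}.ncard

/-- The edge relation of the subgraph of `E` induced by `X`. -/
def edgeOn (E : V → V → Prop) (X : Set V) (a b : V) : Prop :=
  E a b ∧ a ∈ X ∧ b ∈ X

/-- `S` is a source component of the subgraph induced by `X`: a strongly connected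
component of `G[X]` that is not reachable in `G[X]` from any vertex outside it. -/
def IsSourceComponent (E : V → V → Prop) (X : Set V) (S : Set V) : Prop :=
  S.Nonempty ∧ S ⊆ X ∧
  (∀ a ∈ S, ∀ b ∈ S, Reach (edgeOn E X) a b) ∧
  (∀ a ∈ S, ∀ b, Reach (edgeOn E X) a b → Reach (edgeOn E X) b a → b ∈ S) ∧
  (∀ b ∈ X, b ∉ S → ∀ a ∈ S, ¬ Reach (edgeOn E X) b a)

/-- `Pre𝒮`: the non-terminals (other than `s`) having an edge into some source component. -/
def PreS (E : V → V → Prop) (s : V) (X : Set V) : Set V :=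
  {v | v ∉ X ∧ v ≠ s ∧ ∃ t S, IsSourceComponent E X S ∧ t ∈ S ∧ E v t}

/-- `N(v)`: the source components into which `v` has an edge. -/
def Nv (E : V → V → Prop) (X : Set V) (v : V) : Set (Set V) :=
  {S | IsSourceComponent E X S ∧ ∃ t ∈ S, E v t}

/-- `G` is `R`-shallow from `s`: every vertex is reachable from `s` by a walk
with at most `R` edges. -/
def Shallow (E : V → V → Prop) (s : V) (R : ℕ) : Prop :=
  ∀ v, ∃ p, IsWalk E s v p ∧ p.length ≤ R + 1

end SSPT

namespace SSPT

/-- The graph constructed from a set cover instance `(U, 𝒮)`: vertices are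
`s = none`, the sets `some (Sum.inl S)` for `S ∈ 𝒮`, and the elements
`some (Sum.inr x)` for `x : U`; edges go from `s` to each `S ∈ 𝒮` and from each
`S ∈ 𝒮` to each `x ∈ S`. All edges have weight `1`. -/
def scE {U : Type*} (𝒮 : Finset (Finset U)) :
    Option (Finset U ⊕ U) → Option (Finset U ⊕ U) → Prop
  | none, some (Sum.inl S) => S ∈ 𝒮
  | some (Sum.inl S), some (Sum.inr x) => S ∈ 𝒮 ∧ x ∈ S
  | _, _ => False

/-!
The set-cover graph is layered: `s`, then the sets, then the elements. Hence all walks from `s`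
to a given vertex have the same length, and every tree rooted at `s` inside the graph is a
shortest path tree. The set-vertices of a tree spanning `U` form a cover of the same size;
conversely, a cover `𝒞` with a choice `x ↦ f x ∈ 𝒞` of a set containing each `x` gives the tree
with edges `s → f x → x`, whose set-vertices are the range of `f`, of size at most `#𝒞`.
-/

theorem _root_.Nat.sInf_eq_of_subset_of_forall_exists_le {A B : Set ℕ} (hAB : A ⊆ B)
    (hBA : ∀ b ∈ B, ∃ a ∈ A, a ≤ b) : sInf A = sInf B := by
  rcases B.eq_empty_or_nonempty with rfl | hB
  · rw [Set.subset_empty_iff.1 hAB]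
  obtain ⟨a, haA, ha⟩ := hBA _ (Nat.sInf_mem hB)
  exact le_antisymm ((Nat.sInf_le haA).trans ha) (Nat.sInf_le (hAB (Nat.sInf_mem ⟨a, haA⟩)))

theorem IsWalk.mono {V : Type*} {E F : V → V → Prop} (hEF : ∀ a b, E a b → F a b)
    {x y : V} {p : List V} (h : IsWalk E x y p) : IsWalk F x y p :=
  ⟨h.1, h.2.1, h.2.2.1, h.2.2.2.imp fun _ _ => hEF _ _⟩

theorem walkWeight_one {V : Type*} (p : List V) :
    walkWeight (fun _ _ => (1 : ℝ)) p = (p.length - 1 : ℕ) := by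
  simp [walkWeight]

section SetCoverGraph

variable {U : Type*} {𝒮 : Finset (Finset U)}

theorem scE_none_left {b} (h : scE 𝒮 none b) : ∃ S, b = some (Sum.inl S) ∧ S ∈ 𝒮 := by
  match b, h with
  | some (Sum.inl S), h => exact ⟨S, rfl, h⟩

theorem scE_inl_left {S : Finset U} {b} (h : scE 𝒮 (some (Sum.inl S)) b) :
    ∃ x, b = some (Sum.inr x) ∧ S ∈ 𝒮 ∧ x ∈ S := by
  match b, h with
  | some (Sum.inr x), h => exact ⟨x, rfl, h⟩

theorem not_scE_inr_left {x : U} {b} : ¬ scE 𝒮 (some (Sum.inr x)) b := by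
  match b with
  | none => exact id
  | some _ => exact id

theorem scE_inl_right {S : Finset U} {u} (h : scE 𝒮 u (some (Sum.inl S))) : S ∈ 𝒮 := by
  match u, h with
  | none, h => exact h

theorem scE_inr_right {x : U} {u} (h : scE 𝒮 u (some (Sum.inr x))) :
    ∃ S, u = some (Sum.inl S) ∧ S ∈ 𝒮 ∧ x ∈ S := by
  match u, h with
  | some (Sum.inl S), h => exact ⟨S, rfl, h⟩

theorem isWalk_none_cases {E : Option (Finset U ⊕ U) → Option (Finset U ⊕ U) → Prop}
    (hE : ∀ a b, E a b → scE 𝒮 a b) {v : Option (Finset U ⊕ U)}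
    {p : List (Option (Finset U ⊕ U))}
    (h : IsWalk E none v p) :
    (p = [none] ∧ v = none) ∨
    (∃ S, p = [none, some (Sum.inl S)] ∧ v = some (Sum.inl S) ∧ E none (some (Sum.inl S))) ∨
    (∃ S x, p = [none, some (Sum.inl S), some (Sum.inr x)] ∧ v = some (Sum.inr x) ∧
      E none (some (Sum.inl S)) ∧ E (some (Sum.inl S)) (some (Sum.inr x))) := by
  obtain ⟨hne, hhead, hlast, hchain : p.IsChain E⟩ := h
  match p, hne, hhead, hlast, hchain with
  | [a], _, hhead, hlast, _ =>
    cases hhead; cases hlast; exact Or.inl ⟨rfl, rfl⟩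
  | [a, b], _, hhead, hlast, hchain =>
    cases hhead; cases hlast
    simp only [List.isChain_pair] at hchain
    obtain ⟨S, rfl, -⟩ := scE_none_left (hE _ _ hchain)
    exact Or.inr (Or.inl ⟨S, rfl, rfl, hchain⟩)
  | [a, b, c], _, hhead, hlast, hchain =>
    cases hhead; cases hlast
    simp only [List.isChain_cons_cons, List.isChain_singleton, and_true] at hchain
    obtain ⟨S, rfl, -⟩ := scE_none_left (hE _ _ hchain.1)
    obtain ⟨x, rfl, -⟩ := scE_inl_left (hE _ _ hchain.2)
    exact Or.inr (Or.inr ⟨S, x, rfl, rfl, hchain⟩)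
  | a :: b :: c :: d :: l, _, hhead, _, hchain =>
    cases hhead
    simp only [List.isChain_cons_cons] at hchain
    obtain ⟨S, rfl, -⟩ := scE_none_left (hE _ _ hchain.1)
    obtain ⟨x, rfl, -⟩ := scE_inl_left (hE _ _ hchain.2.1)
    exact absurd (hE _ _ hchain.2.2.1) not_scE_inr_left

theorem length_eq_of_isWalk_scE {v : Option (Finset U ⊕ U)} {p q : List (Option (Finset U ⊕ U))}
    (hp : IsWalk (scE 𝒮) none v p) (hq : IsWalk (scE 𝒮) none v q) : p.length = q.length := by
  rcases isWalk_none_cases (fun _ _ => id) hp with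
    ⟨rfl, rfl⟩ | ⟨S, rfl, rfl, -⟩ | ⟨S, x, rfl, rfl, -⟩ <;>
  rcases isWalk_none_cases (fun _ _ => id) hq with
    ⟨rfl, h⟩ | ⟨S', rfl, h, -⟩ | ⟨S', x', rfl, h, -⟩ <;>
  first | rfl | cases h

theorem walkWeight_le_of_isWalk_subgraph
    {T : Option (Finset U ⊕ U) → Option (Finset U ⊕ U) → Prop} (hT : ∀ a b, T a b → scE 𝒮 a b)
    {v : Option (Finset U ⊕ U)} {p q : List (Option (Finset U ⊕ U))}
    (hp : IsWalk T none v p) (hq : IsWalk (scE 𝒮) none v q) :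
    walkWeight (fun _ _ => (1 : ℝ)) p ≤ walkWeight (fun _ _ => (1 : ℝ)) q := by
  rw [walkWeight_one, walkWeight_one, length_eq_of_isWalk_scE (hp.mono hT) hq]

open Classical in
theorem exists_cover_of_spanning_subgraph
    {T : Option (Finset U ⊕ U) → Option (Finset U ⊕ U) → Prop} (hT : ∀ a b, T a b → scE 𝒮 a b)
    (hspan : ∀ x : U, InTree T none (some (Sum.inr x))) :
    ∃ 𝒞 ⊆ 𝒮, (∀ x : U, ∃ S ∈ 𝒞, x ∈ S) ∧
      𝒞.card = {S : Finset U | InTree T none (some (Sum.inl S))}.ncard := by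
  refine ⟨𝒮.filter fun S => InTree T none (some (Sum.inl S)), Finset.filter_subset _ _, ?_, ?_⟩
  · intro x
    rcases hspan x with h | ⟨u, hu⟩ | ⟨u, hu⟩
    · cases h
    · obtain ⟨S, rfl, hS, hxS⟩ := scE_inr_right (hT _ _ hu)
      exact ⟨S, Finset.mem_filter.2 ⟨hS, Or.inr (Or.inr ⟨_, hu⟩)⟩, hxS⟩
    · exact absurd (hT _ _ hu) not_scE_inr_left
  · rw [← Set.ncard_coe_finset, Finset.coe_filter]
    congr 1
    ext S
    refine ⟨And.right, fun hS => ⟨?_, hS⟩⟩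
    rcases hS with h | ⟨u, hu⟩ | ⟨u, hu⟩
    · cases h
    · exact scE_inl_right (hT _ _ hu)
    · obtain ⟨x, -, hS, -⟩ := scE_inl_left (hT _ _ hu)
      exact hS

def coverTree (f : U → Finset U) : Option (Finset U ⊕ U) → Option (Finset U ⊕ U) → Prop
  | none, some (Sum.inl S) => S ∈ Set.range f
  | some (Sum.inl S), some (Sum.inr x) => f x = S
  | _, _ => False

variable {f : U → Finset U}

theorem coverTree_le_scE (hf : ∀ x, f x ∈ 𝒮 ∧ x ∈ f x) {a b} (h : coverTree f a b) :
    scE 𝒮 a b := by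
  match a, b, h with
  | none, some (Sum.inl _), ⟨x, rfl⟩ => exact (hf x).1
  | some (Sum.inl _), some (Sum.inr x), rfl => exact hf x

theorem inTree_coverTree_inl_iff {S : Finset U} :
    InTree (coverTree f) none (some (Sum.inl S)) ↔ S ∈ Set.range f := by
  refine ⟨fun h => ?_, fun h => Or.inr (Or.inl ⟨none, h⟩)⟩
  rcases h with h | ⟨u, hu⟩ | ⟨u, hu⟩
  · cases h
  · match u, hu with
    | none, hu => exact hu
  · match u, hu with
    | some (Sum.inr x), hu => exact ⟨x, hu⟩

theorem inTree_coverTree_inr (x : U) : InTree (coverTree f) none (some (Sum.inr x)) :=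
  Or.inr (Or.inl ⟨some (Sum.inl (f x)), rfl⟩)

theorem isTree_coverTree (hf : ∀ x, f x ∈ 𝒮 ∧ x ∈ f x) : IsTree (coverTree f) none := by
  have hsub : ∀ a b, coverTree f a b → scE 𝒮 a b := fun _ _ => coverTree_le_scE hf
  intro v hv
  match v, hv with
  | none, _ =>
    refine ⟨[none], ⟨by simp, rfl, rfl, List.isChain_singleton _⟩, fun p hp => ?_⟩
    rcases isWalk_none_cases hsub hp with ⟨rfl, -⟩ | ⟨S, -, h, -⟩ | ⟨S, x, -, h, -⟩
    · rfl
    all_goals cases h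
  | some (Sum.inl S), hv =>
    refine ⟨[none, some (Sum.inl S)], ⟨by simp, rfl, rfl, ?_⟩, fun p hp => ?_⟩
    · exact List.isChain_pair.2 (inTree_coverTree_inl_iff.1 hv)
    rcases isWalk_none_cases hsub hp with ⟨-, h⟩ | ⟨S', rfl, h, -⟩ | ⟨S', x, -, h, -⟩ <;> cases h
    rfl
  | some (Sum.inr x), _ =>
    refine ⟨[none, some (Sum.inl (f x)), some (Sum.inr x)], ⟨by simp, rfl, rfl, ?_⟩, fun p hp => ?_⟩
    · exact List.isChain_cons_cons.2 ⟨⟨x, rfl⟩, List.isChain_pair.2 rfl⟩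
    rcases isWalk_none_cases hsub hp with ⟨-, h⟩ | ⟨S', -, h, -⟩ | ⟨S', y, rfl, h, -, hS'⟩ <;>
      cases h
    cases hS'
    rfl

theorem exists_spanning_tree_of_cover {𝒞 : Finset (Finset U)} (h𝒞 : 𝒞 ⊆ 𝒮)
    (hcov : ∀ x : U, ∃ S ∈ 𝒞, x ∈ S) :
    ∃ T : Option (Finset U ⊕ U) → Option (Finset U ⊕ U) → Prop,
      (∀ a b, T a b → scE 𝒮 a b) ∧ IsTree T none ∧
      (∀ x : U, InTree T none (some (Sum.inr x))) ∧
      {S : Finset U | InTree T none (some (Sum.inl S))}.ncard ≤ 𝒞.card := by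
  choose f hf𝒞 hxf using hcov
  have hf : ∀ x, f x ∈ 𝒮 ∧ x ∈ f x := fun x => ⟨h𝒞 (hf𝒞 x), hxf x⟩
  refine ⟨coverTree f, fun _ _ => coverTree_le_scE hf, isTree_coverTree hf,
    inTree_coverTree_inr, ?_⟩
  simp only [inTree_coverTree_inl_iff, Set.ofPred_mem_eq]
  rw [← Set.ncard_coe_finset]
  exact Set.ncard_le_ncard (Set.range_subset_iff.2 hf𝒞) 𝒞.finite_toSet

end SetCoverGraph

theorem stmt9_general {U : Type*} (𝒮 : Finset (Finset U)) :
    sInf {n : ℕ | ∃ T : Option (Finset U ⊕ U) → Option (Finset U ⊕ U) → Prop,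
        (∀ a b, T a b → scE 𝒮 a b) ∧ IsTree T none ∧
        (∀ x : U, InTree T none (some (Sum.inr x))) ∧
        (∀ v p, InTree T none v → IsWalk T none v p →
          (∀ q, IsWalk (scE 𝒮) none v q →
            walkWeight (fun _ _ => (1 : ℝ)) p ≤ walkWeight (fun _ _ => (1 : ℝ)) q)) ∧
        n = {S : Finset U | InTree T none (some (Sum.inl S))}.ncard} =
      sInf {n : ℕ | ∃ 𝒞 ⊆ 𝒮, (∀ x : U, ∃ S ∈ 𝒞, x ∈ S) ∧ n = 𝒞.card} := by
  refine Nat.sInf_eq_of_subset_of_forall_exists_le ?_ ?_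
  · rintro n ⟨T, hT, -, hspan, -, rfl⟩
    obtain ⟨𝒞, h𝒞, hcov𝒞, hcard⟩ := exists_cover_of_spanning_subgraph hT hspan
    exact ⟨𝒞, h𝒞, hcov𝒞, hcard.symm⟩
  · rintro n ⟨𝒞, h𝒞, hcov𝒞, rfl⟩
    obtain ⟨T, hT, htree, hspan, hcard⟩ := exists_spanning_tree_of_cover h𝒞 hcov𝒞
    exact ⟨_, ⟨T, hT, htree, hspan, fun _ _ _ hp _ => walkWeight_le_of_isWalk_subgraph hT hp, rfl⟩,
      hcard⟩

/-- in the set-cover graph, the minimum, over all shortest path trees from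
`s` spanning `U`, of the number of tree vertices lying in `𝒮`, equals the minimum
cardinality of a subfamily of `𝒮` covering `U`. -/
theorem stmt9 {U : Type*} [DecidableEq U] [Fintype U] [Nonempty U]
    (𝒮 : Finset (Finset U)) (hcov : ∀ x : U, ∃ S ∈ 𝒮, x ∈ S) :
    sInf {n : ℕ | ∃ T : Option (Finset U ⊕ U) → Option (Finset U ⊕ U) → Prop,
        (∀ a b, T a b → scE 𝒮 a b) ∧ IsTree T none ∧
        (∀ x : U, InTree T none (some (Sum.inr x))) ∧
        (∀ v p, InTree T none v → IsWalk T none v p →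
          (∀ q, IsWalk (scE 𝒮) none v q →
            walkWeight (fun _ _ => (1 : ℝ)) p ≤ walkWeight (fun _ _ => (1 : ℝ)) q)) ∧
        n = {S : Finset U | InTree T none (some (Sum.inl S))}.ncard} =
      sInf {n : ℕ | ∃ 𝒞 ⊆ 𝒮, (∀ x : U, ∃ S ∈ 𝒞, x ∈ S) ∧ n = 𝒞.card} :=
  stmt9_general 𝒮

end SSPT
end

section
/- Let T be a tree rooted at s in G that contains at least one terminal from every source component of G[X]. Then there exists a tree T' rooted at s in G that spans all of X and whose set of non-terminal vertices equals the set of non-terminal vertices of T; in particular nt(T') = nt(T). -/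
/-! Every terminal is reachable inside `G[X]` from a source component, hence from a terminal
of `T`. So while some terminal is missing, a `G[X]`-path to it from `T` leaves `T` along an
edge whose head is a terminal; hanging that terminal below the tail keeps `T` a tree and adds
no non-terminal. Induct on the number of missing terminals. -/

namespace SSPT

section Walks

variable {R : V → V → Prop}

lemma isWalk_iff {x y : V} {p : List V} :
    IsWalk R x y p ↔ p ≠ [] ∧ p.head? = some x ∧ p.getLast? = some y ∧ p.IsChain R := Iff.rfl

lemma reach_iff_reflTransGen {x y : V} : Reach R x y ↔ Relation.ReflTransGen R x y := by
  constructor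
  · rintro ⟨p, hp⟩
    obtain ⟨hne, hhead, hlast, hchain⟩ := isWalk_iff.1 hp
    rw [List.head?_eq_some_head hne, Option.some_inj] at hhead
    rw [List.getLast?_eq_some_getLast hne, Option.some_inj] at hlast
    simpa [hhead, hlast] using List.relationReflTransGen_of_exists_isChain p hchain hne
  · intro h
    obtain ⟨p, hne, hchain, hhead, hlast⟩ := List.exists_isChain_ne_nil_of_relationReflTransGen h
    exact ⟨p, hne, by rw [List.head?_eq_some_head hne, hhead],
      by rw [List.getLast?_eq_some_getLast hne, hlast], hchain⟩

lemma Reach.refl (x : V) : Reach R x x := reach_iff_reflTransGen.2 .refl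

lemma Reach.trans {x y z : V} (hxy : Reach R x y) (hyz : Reach R y z) : Reach R x z :=
  reach_iff_reflTransGen.2 ((reach_iff_reflTransGen.1 hxy).trans (reach_iff_reflTransGen.1 hyz))

lemma Reach.exists_edge_of_mem_of_notMem {P : Set V} {x y : V} (h : Reach R x y)
    (hx : x ∈ P) (hy : y ∉ P) : ∃ a b, a ∈ P ∧ b ∉ P ∧ R a b := by
  induction reach_iff_reflTransGen.1 h with
  | refl => exact absurd hx hy
  | @tail b c _ hbc ih =>
    by_cases hb : b ∈ P
    · exact ⟨b, c, hb, hy, hbc⟩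
    · exact ih (reach_iff_reflTransGen.2 ‹_›) hb

lemma IsWalk.snoc {x y z : V} {p : List V} (hp : IsWalk R x y p) (hyz : R y z) :
    IsWalk R x z (p ++ [z]) := by
  obtain ⟨hne, hhead, hlast, hchain⟩ := isWalk_iff.1 hp
  refine isWalk_iff.2 ⟨by simp, by rw [List.head?_append, hhead]; rfl, List.getLast?_concat, ?_⟩
  rw [List.isChain_append]
  exact ⟨hchain, .singleton z, fun a ha b hb => by simp_all⟩

lemma IsWalk.of_snoc {x z : V} {q : List V} (hq : IsWalk R x z (q ++ [z])) (hne : q ≠ []) :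
    ∃ y, IsWalk R x y q ∧ R y z := by
  obtain ⟨-, hhead, -, hchain⟩ := isWalk_iff.1 hq
  rw [List.isChain_append] at hchain
  refine ⟨q.getLast hne, ⟨hne, by rwa [List.head?_append_of_ne_nil _ hne] at hhead,
    List.getLast?_eq_some_getLast hne, hchain.1⟩, ?_⟩
  exact hchain.2.2 _ (List.getLast?_eq_some_getLast hne) z rfl

lemma IsWalk.imp_of_mem {S : V → V → Prop} {x y : V} {p : List V} (hp : IsWalk R x y p)
    (h : ∀ a b, a ∈ p → b ∈ p → R a b → S a b) : IsWalk S x y p :=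
  have ⟨hne, hhead, hlast, hchain⟩ := isWalk_iff.1 hp
  ⟨hne, hhead, hlast, hchain.imp_of_mem_imp h⟩

lemma _root_.List.IsChain.eq_append_singleton_of_mem {v : V} (hv : ∀ c, ¬ R v c)
    {p : List V} (hp : p.IsChain R) (hvp : v ∈ p) : ∃ q, p = q ++ [v] ∧ v ∉ q := by
  have tail_nil : ∀ l₁ l₂, (l₁ ++ v :: l₂).IsChain R → l₂ = [] := by
    rintro l₁ (_ | ⟨c, l₂⟩) h
    · rfl
    · exact absurd (List.isChain_append_cons_cons.1 h).2.1 (hv c)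
  obtain ⟨l₁, l₂, rfl⟩ := List.append_of_mem hvp
  obtain rfl := tail_nil l₁ l₂ hp
  refine ⟨l₁, rfl, fun hvl₁ => ?_⟩
  obtain ⟨m₁, m₂, rfl⟩ := List.append_of_mem hvl₁
  simpa using tail_nil m₁ (m₂ ++ [v]) (by simpa using hp)

end Walks

section Trees

variable {T : V → V → Prop} {s : V}

lemma InTree.mono {T' : V → V → Prop} (h : ∀ a b, T a b → T' a b) {v : V}
    (hv : InTree T s v) : InTree T' s v := by
  rcases hv with rfl | ⟨u, hu⟩ | ⟨u, hu⟩
  · exact .inl rfl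
  · exact .inr (.inl ⟨u, h _ _ hu⟩)
  · exact .inr (.inr ⟨u, h _ _ hu⟩)

def addEdge (T : V → V → Prop) (u v : V) (a b : V) : Prop :=
  T a b ∨ (a = u ∧ b = v)

variable {u v : V}

lemma inTree_addEdge_target : InTree (addEdge T u v) s v := .inr (.inl ⟨u, .inr ⟨rfl, rfl⟩⟩)

lemma InTree.of_addEdge {w : V} (hw : InTree (addEdge T u v) s w) (hu : InTree T s u) :
    InTree T s w ∨ w = v := by
  rcases hw with rfl | ⟨c, hc | ⟨rfl, rfl⟩⟩ | ⟨c, hc | ⟨rfl, rfl⟩⟩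
  · exact .inl (.inl rfl)
  · exact .inl (.inr (.inl ⟨c, hc⟩))
  · exact .inr rfl
  · exact .inl (.inr (.inr ⟨c, hc⟩))
  · exact .inl hu

lemma IsWalk.of_addEdge {x y : V} {p : List V} (hp : IsWalk (addEdge T u v) x y p)
    (hvp : v ∉ p) : IsWalk T x y p :=
  hp.imp_of_mem fun _ _ _ hb h => h.resolve_right fun ⟨_, hbv⟩ => hvp (hbv ▸ hb)

lemma isTree_addEdge (htree : IsTree T s) (hu : InTree T s u) (hv : ¬ InTree T s v) :
    IsTree (addEdge T u v) s := by
  -- a walk can visit `v` only as its last vertex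
  have no_out : ∀ c, ¬ addEdge T u v v c := by
    rintro c (h | ⟨rfl, -⟩)
    exacts [hv (.inr (.inr ⟨c, h⟩)), hv hu]
  intro w hw
  rcases hw.of_addEdge hu with hw | rfl
  · obtain ⟨p₀, hp₀, huniq⟩ := htree w hw
    refine ⟨p₀, hp₀.imp_of_mem fun _ _ _ _ => .inl, fun p hp => huniq p (hp.of_addEdge ?_)⟩
    intro hvp
    obtain ⟨q, rfl, -⟩ := hp.2.2.2.eq_append_singleton_of_mem no_out hvp
    have hvw : v = w := by simpa using hp.2.2.1
    exact hv (hvw ▸ hw)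
  · obtain ⟨p₀, hp₀, huniq⟩ := htree u hu
    refine ⟨p₀ ++ [w], (hp₀.imp_of_mem fun _ _ _ _ => .inl).snoc (.inr ⟨rfl, rfl⟩),
      fun p hp => ?_⟩
    obtain ⟨q, rfl, hwq⟩ :=
      hp.2.2.2.eq_append_singleton_of_mem no_out (List.mem_of_getLast? hp.2.2.1)
    have hq : q ≠ [] := by
      rintro rfl
      exact hv (.inl (by simpa using hp.2.1))
    obtain ⟨y, hqy, hyw⟩ := hp.of_snoc hq
    obtain rfl : y = u := hyw.elim (fun h => absurd (.inr (.inl ⟨y, h⟩)) hv) And.left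
    rw [huniq q (hqy.of_addEdge hwq)]

end Trees

section SourceComponents

variable {E : V → V → Prop} {X : Set V}

lemma Reach.eq_or_mem_of_edgeOn {a b : V} (h : Reach (edgeOn E X) a b) : a = b ∨ a ∈ X := by
  rcases (reach_iff_reflTransGen.1 h).cases_head with h | ⟨c, hac, -⟩
  exacts [.inl h, .inr hac.2.1]

lemma isSourceComponent_of_forall_reach {b : V} (hb : b ∈ X)
    (hmin : ∀ a, Reach (edgeOn E X) a b → Reach (edgeOn E X) b a) :
    IsSourceComponent E X {c | Reach (edgeOn E X) b c ∧ Reach (edgeOn E X) c b} := by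
  refine ⟨⟨b, .refl b, .refl b⟩, ?_, ?_, ?_, ?_⟩
  · rintro c ⟨-, hcb⟩
    exact hcb.eq_or_mem_of_edgeOn.elim (· ▸ hb) id
  · rintro c ⟨-, hcb⟩ d ⟨hbd, -⟩
    exact hcb.trans hbd
  · rintro c ⟨hbc, hcb⟩ d hcd hdc
    exact ⟨hbc.trans hcd, hdc.trans hcb⟩
  · rintro d - hdS c ⟨-, hcb⟩ hdc
    exact hdS ⟨hmin d (hdc.trans hcb), hdc.trans hcb⟩

lemma exists_isSourceComponent_reach [Finite V] {x : V} (hx : x ∈ X) :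
    ∃ S, IsSourceComponent E X S ∧ ∃ t ∈ S, Reach (edgeOn E X) t x := by
  let F := edgeOn E X
  let r a b := Reach F a b ∧ ¬ Reach F b a
  have : IsTrans V r :=
    ⟨fun _ _ _ hab hbc => ⟨hab.1.trans hbc.1, fun hca => hab.2 (hbc.1.trans hca)⟩⟩
  have : Std.Irrefl r := ⟨fun a h => h.2 h.1⟩
  obtain ⟨b, hbx, hmin⟩ :=
    (Finite.wellFounded_of_trans_of_irrefl r).has_min {c | Reach F c x} ⟨x, .refl x⟩
  have hmin' : ∀ a, Reach F a b → Reach F b a := fun a hab =>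
    not_not.1 fun hba => hmin a (hab.trans hbx) ⟨hab, hba⟩
  have hb : b ∈ X := hbx.eq_or_mem_of_edgeOn.elim (· ▸ hx) id
  exact ⟨_, isSourceComponent_of_forall_reach hb hmin', b, ⟨.refl b, .refl b⟩, hbx⟩

end SourceComponents

lemma exists_spanning_supertree [Finite V] {E : V → V → Prop} {s : V} {X : Set V}
    {T : V → V → Prop} (hsub : ∀ a b, T a b → E a b) (htree : IsTree T s)
    (hreach : ∀ x ∈ X, ∃ t, InTree T s t ∧ Reach (edgeOn E X) t x) :
    ∃ T' : V → V → Prop, (∀ a b, T' a b → E a b) ∧ IsTree T' s ∧ (∀ x ∈ X, InTree T' s x) ∧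
      (∀ v, InTree T s v → InTree T' s v) ∧ (∀ v, InTree T' s v → InTree T s v ∨ v ∈ X) := by
  induction hn : (X \ {v | InTree T s v}).ncard using Nat.strong_induction_on generalizing T
    with | _ n ih =>
  by_cases hspan : ∀ x ∈ X, InTree T s x
  · exact ⟨T, hsub, htree, hspan, fun _ => id, fun _ => .inl⟩
  obtain ⟨x, hxX, hxT⟩ : ∃ x ∈ X, ¬ InTree T s x := by simpa using hspan
  obtain ⟨t, ht, htx⟩ := hreach x hxX
  obtain ⟨u, w, hu, hw, huw⟩ :=
    htx.exists_edge_of_mem_of_notMem (P := {v | InTree T s v}) ht hxT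
  have hT : ∀ a b, T a b → addEdge T u w a b := fun _ _ => .inl
  have hlt : (X \ {v | InTree (addEdge T u w) s v}).ncard < n := by
    refine hn ▸ Set.ncard_lt_ncard ((Set.ssubset_iff_of_subset ?_).2 ⟨w, ⟨huw.2.2, hw⟩, ?_⟩)
    · exact fun z ⟨hzX, hz⟩ => ⟨hzX, fun hzT => hz (hzT.mono hT)⟩
    · exact fun h => h.2 inTree_addEdge_target
  obtain ⟨T', hsub', htree', hspan', hmono, hvert⟩ := ih _ hlt
    (by rintro a b (h | ⟨rfl, rfl⟩); exacts [hsub a b h, huw.1])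
    (isTree_addEdge htree hu hw)
    (fun x hx => (hreach x hx).imp fun _ ⟨h, hr⟩ => ⟨h.mono hT, hr⟩) rfl
  refine ⟨T', hsub', htree', hspan', fun v hv => hmono v (hv.mono hT), fun v hv => ?_⟩
  rcases hvert v hv with h | h
  · exact (h.of_addEdge hu).imp_right fun (hvw : v = w) => hvw ▸ huw.2.2
  · exact .inr h

theorem stmt10_general {V : Type*} [Fintype V] (E : V → V → Prop) (s : V) (X : Set V)
    (T : V → V → Prop) (hsub : ∀ a b, T a b → E a b) (htree : IsTree T s)
    (hhit : ∀ S, IsSourceComponent E X S → ∃ t ∈ S, InTree T s t) :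
    ∃ T' : V → V → Prop, (∀ a b, T' a b → E a b) ∧ IsTree T' s ∧
      (∀ t ∈ X, InTree T' s t) ∧
      {v | InTree T' s v ∧ v ≠ s ∧ v ∉ X} = {v | InTree T s v ∧ v ≠ s ∧ v ∉ X} ∧
      nt T' s X = nt T s X := by
  have hreach : ∀ x ∈ X, ∃ t, InTree T s t ∧ Reach (edgeOn E X) t x := by
    intro x hx
    obtain ⟨S, hS, t₀, ht₀, ht₀x⟩ := exists_isSourceComponent_reach hx
    obtain ⟨t, htS, ht⟩ := hhit S hS
    exact ⟨t, ht, (hS.2.2.1 t htS t₀ ht₀).trans ht₀x⟩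
  obtain ⟨T', hsub', htree', hspan', hmono, hvert⟩ := exists_spanning_supertree hsub htree hreach
  have hnt : {v | InTree T' s v ∧ v ≠ s ∧ v ∉ X} = {v | InTree T s v ∧ v ≠ s ∧ v ∉ X} := by
    ext v
    exact ⟨fun ⟨hv, hvs, hvX⟩ => ⟨(hvert v hv).resolve_right hvX, hvs, hvX⟩,
      fun ⟨hv, hvs, hvX⟩ => ⟨hmono v hv, hvs, hvX⟩⟩
  exact ⟨T', hsub', htree', hspan', hnt, by rw [nt, nt, hnt]⟩

/-- if a tree `T` rooted at `s` contains at least one terminal from every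
source component of `G[X]`, then there is a tree `T'` rooted at `s` spanning all of `X`
whose set of non-terminal vertices equals that of `T`; in particular `nt T' = nt T`. -/
theorem stmt10 {V : Type*} [Fintype V] (E : V → V → Prop) (s : V) (X : Set V)
    (hsX : s ∉ X)
    (T : V → V → Prop) (hsub : ∀ a b, T a b → E a b) (htree : IsTree T s)
    (hhit : ∀ S, IsSourceComponent E X S → ∃ t ∈ S, InTree T s t) :
    ∃ T' : V → V → Prop, (∀ a b, T' a b → E a b) ∧ IsTree T' s ∧
      (∀ t ∈ X, InTree T' s t) ∧
      {v | InTree T' s v ∧ v ≠ s ∧ v ∉ X} = {v | InTree T s v ∧ v ≠ s ∧ v ∉ X} ∧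
      nt T' s X = nt T s X :=
  stmt10_general E s X T hsub htree hhit

end SSPT
end

section
/- Let T be a tree rooted at s in G that spans X, and let S be a source component of G[X]. Then T contains an edge (v,t) such that v ∉ X (v is a non-terminal or v = s, and if S contains no terminal reachable directly from s then v is a non-terminal) and t ∈ S; more precisely, if t is a terminal of S at minimum tree-distance from s in T, then the parent v of t in T satisfies v ∉ X. -/
namespace SSPT

section

variable {V : Type*} {E T : V → V → Prop} {s t v : V} {p q : List V}

lemma IsWalk.pair (h : E v t) : IsWalk E v t [v, t] :=
  ⟨by simp, rfl, rfl, List.isChain_pair.mpr h⟩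

lemma IsWalk.append_edge (hq : IsWalk T s v q) (h : T v t) : IsWalk T s t (q ++ [t]) := by
  obtain ⟨hne, hhd, hlast, hch⟩ := hq
  refine ⟨by simp, by rwa [List.head?_append_of_ne_nil _ hne], by simp, ?_⟩
  rw [List.Chain', List.isChain_append]
  refine ⟨hch, List.isChain_singleton _, fun x hx y hy => ?_⟩
  rw [hlast, Option.mem_some_iff] at hx
  rw [List.head?_singleton, Option.mem_some_iff] at hy
  exact hx ▸ hy ▸ h

lemma IsWalk.exists_edge_into (hp : IsWalk T s t p) (hts : t ≠ s) : ∃ v, T v t := by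
  obtain ⟨hne, hhd, hlast, hch⟩ := hp
  have hp : p = p.dropLast ++ [t] := by
    rw [List.getLast?_eq_some_getLast hne, Option.some_inj] at hlast
    conv_lhs => rw [← List.dropLast_append_getLast hne, hlast]
  have hq : p.dropLast ≠ [] := by
    intro h
    rw [h, List.nil_append] at hp
    rw [hp, List.head?_singleton, Option.some_inj] at hhd
    exact hts hhd
  rw [hp, List.Chain', List.isChain_append] at hch
  exact ⟨_, hch.2.2 _ (List.getLast?_eq_some_getLast hq) t rfl⟩

lemma IsTree.eq_append_of_edge (htree : IsTree T s) (hp : IsWalk T s t p)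
    (hq : IsWalk T s v q) (h : T v t) : p = q ++ [t] :=
  (htree t (Or.inr (Or.inl ⟨v, h⟩))).unique hp (hq.append_edge h)

lemma IsSourceComponent.mem_of_edge {X S : Set V} (hS : IsSourceComponent E X S)
    (hv : v ∈ X) (ht : t ∈ S) (h : E v t) : v ∈ S := by
  by_contra hvS
  exact hS.2.2.2.2 v hv hvS t ht ⟨_, IsWalk.pair ⟨h, hv, hS.2.1 ht⟩⟩

lemma exists_walk_length_minimal {S : Set V} (h : ∃ t ∈ S, Reach T s t) :
    ∃ t ∈ S, ∃ p, IsWalk T s t p ∧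
      ∀ t' ∈ S, ∀ p', IsWalk T s t' p' → p.length ≤ p'.length := by
  classical
  have hn : ∃ n, ∃ t ∈ S, ∃ p, IsWalk T s t p ∧ p.length = n := by
    obtain ⟨t, ht, p, hp⟩ := h
    exact ⟨_, t, ht, p, hp, rfl⟩
  obtain ⟨t, ht, p, hp, hlen⟩ := Nat.find_spec hn
  exact ⟨t, ht, p, hp, fun t' ht' p' hp' => hlen ▸ Nat.find_min' hn ⟨t', ht', p', hp', rfl⟩⟩

/-- An in-neighbour of `t` from `X` would lie in `S`, since `S` is a source component, and be
closer to the root than `t`. -/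
lemma notMem_of_edge_into_closest {X S : Set V} (hsub : ∀ a b, T a b → E a b)
    (htree : IsTree T s) (hS : IsSourceComponent E X S) (ht : t ∈ S) (hp : IsWalk T s t p)
    (hmin : ∀ t' ∈ S, ∀ p', IsWalk T s t' p' → p.length ≤ p'.length) (hvt : T v t) :
    v ∉ X := by
  intro hvX
  obtain ⟨q, hq, -⟩ := htree v (Or.inr (Or.inr ⟨t, hvt⟩))
  have hle := hmin v (hS.mem_of_edge hvX ht (hsub v t hvt)) q hq
  rw [htree.eq_append_of_edge hp hq hvt, List.length_append] at hle
  simp at hle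

end

theorem stmt11_general {V : Type*} (E : V → V → Prop) (s : V) (X : Set V)
    (hsX : s ∉ X)
    (T : V → V → Prop) (hsub : ∀ a b, T a b → E a b) (htree : IsTree T s)
    (hspan : ∀ t ∈ X, InTree T s t)
    (S : Set V) (hS : IsSourceComponent E X S) :
    (∃ v t, T v t ∧ t ∈ S ∧ v ∉ X) ∧
      ∀ t ∈ S, ∀ p, IsWalk T s t p →
        (∀ t' ∈ S, ∀ p', IsWalk T s t' p' → p.length ≤ p'.length) →
        ∀ v, T v t → v ∉ X := by
  refine ⟨?_, fun t ht p hp hmin v hvt =>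
    notMem_of_edge_into_closest hsub htree hS ht hp hmin hvt⟩
  obtain ⟨t₀, ht₀⟩ := hS.1
  obtain ⟨t, ht, p, hp, hmin⟩ :=
    exists_walk_length_minimal ⟨t₀, ht₀, (htree t₀ (hspan t₀ (hS.2.1 ht₀))).exists⟩
  obtain ⟨v, hvt⟩ := hp.exists_edge_into fun h => hsX (h ▸ hS.2.1 ht)
  exact ⟨v, t, hvt, ht, notMem_of_edge_into_closest hsub htree hS ht hp hmin hvt⟩

/-- if `T` is a tree rooted at `s` spanning `X` and `S` is a source
component of `G[X]`, then `T` contains an edge `(v,t)` with `v ∉ X` and `t ∈ S`;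
more precisely, for any terminal `t ∈ S` at minimum tree-distance from `s` in `T`
among the terminals of `S`, the parent `v` of `t` in `T` satisfies `v ∉ X`. -/
theorem stmt11 {V : Type*} [Fintype V] (E : V → V → Prop) (s : V) (X : Set V)
    (hsX : s ∉ X)
    (T : V → V → Prop) (hsub : ∀ a b, T a b → E a b) (htree : IsTree T s)
    (hspan : ∀ t ∈ X, InTree T s t)
    (S : Set V) (hS : IsSourceComponent E X S) :
    (∃ v t, T v t ∧ t ∈ S ∧ v ∉ X) ∧
      ∀ t ∈ S, ∀ p, IsWalk T s t p →
        (∀ t' ∈ S, ∀ p', IsWalk T s t' p' → p.length ≤ p'.length) →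
        ∀ v, T v t → v ∉ X :=
  stmt11_general E s X hsX T hsub htree hspan S hS

end SSPT
end
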